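/- arXiv:1111.7285 — 5 statements merged into one kernel-verified Lean document; each statement's English description precedes it below -/
import Mathlib

section
/- Let A be a commutative ℚ-algebra. The A-algebra homomorphism from A[X] to the subalgebra of A[[ε₁, ε₂, …]]/(ε_i²) generated by the elementary symmetric series, determined by X ↦ e₁, sends X^n to n! · e_n; hence it extends to an isomorphism from the divided-power polynomial algebra onto A⟨e₁, e₂, …⟩, and e_n = e₁^n / n! for all n. -/
/-!
Modulo `squaresIdeal` only the coefficients at squarefree monomials matter. At a squarefree
monomial in `n + 1` variables, the coefficient of `e₁ * e_n` counts the ways of removing one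
of these variables, so `e₁ * e_n ≡ (n + 1) • e_{n+1}` and by induction `e₁ ^ n ≡ n! • e_n`.
Hence the coefficient of `ε₀ ⋯ ε_{n-1}` in `p(e₁)` is `n! • p.coeff n`, which gives
injectivity because `n!` is invertible over `ℚ`; and `e_n = (n!)⁻¹ • e₁ ^ n` gives the range.
-/

open scoped Classical

/-- The `i`-th elementary symmetric power series
`e_i = Σ_{j₁ < ⋯ < j_i} ε_{j₁}⋯ε_{j_i}` in the variables `ε₀, ε₁, …`:
its coefficient at a monomial is `1` exactly on squarefree monomials in `i` distinct
variables, and `0` otherwise. -/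
noncomputable def elemSymSeries (A : Type*) [CommRing A] (i : ℕ) : MvPowerSeries ℕ A :=
  fun m => if (∀ n, m n ≤ 1) ∧ m.support.card = i then (1 : A) else 0

/-- The (closed) ideal of `A[[ε₀, ε₁, …]]` consisting of the series supported on
non-squarefree monomials; quotienting by it imposes the relations `ε_i² = 0`. -/
noncomputable def squaresIdeal (A : Type*) [CommRing A] : Ideal (MvPowerSeries ℕ A) where
  carrier := {f | ∀ m : ℕ →₀ ℕ, (∀ n, m n ≤ 1) → MvPowerSeries.coeff (R := A) m f = 0}
  add_mem' := by
    intro a b ha hb m hm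
    rw [map_add, ha m hm, hb m hm, add_zero]
  zero_mem' := by
    intro m hm
    exact map_zero _
  smul_mem' := by
    intro c f hf m hm
    rw [smul_eq_mul, MvPowerSeries.coeff_mul]
    refine Finset.sum_eq_zero fun p hp => ?_
    have hsum : p.1 + p.2 = m := Finset.HasAntidiagonal.mem_antidiagonal.mp hp
    have h2 : ∀ n, p.2 n ≤ 1 := by
      intro n
      have h1 : p.1 n + p.2 n = m n := by rw [← hsum]; rfl
      have := hm n
      omega
    rw [hf p.2 h2, mul_zero]

open MvPowerSeries Finsupp

theorem Finsupp.le_one_and_card_support_eq_one_iff {α : Type*} {m : α →₀ ℕ} :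
    ((∀ k, m k ≤ 1) ∧ m.support.card = 1) ↔ ∃ x, m = single x 1 := by
  constructor
  · rintro ⟨hm, hcard⟩
    obtain ⟨x, b, hb, rfl⟩ := card_support_eq_one'.mp hcard
    exact ⟨x, by rw [le_antisymm (by simpa using hm x) (Nat.one_le_iff_ne_zero.mpr hb)]⟩
  · rintro ⟨x, rfl⟩
    refine ⟨fun k => ?_, by simp⟩
    rw [single_apply]
    split_ifs <;> simp

theorem exists_le_one_card_support_eq (n : ℕ) :
    ∃ m : ℕ →₀ ℕ, (∀ k, m k ≤ 1) ∧ m.support.card = n := by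
  refine ⟨Multiset.toFinsupp (Multiset.range n), fun k => ?_, ?_⟩
  · exact Multiset.nodup_iff_count_le_one.mp (Multiset.nodup_range n) k
  · rw [Multiset.toFinsupp_support, Multiset.toFinset_card_of_nodup (Multiset.nodup_range n),
      Multiset.card_range]

section
variable {A : Type*} [CommRing A]

theorem mk_squaresIdeal_eq_iff {f g : MvPowerSeries ℕ A} :
    Ideal.Quotient.mk (squaresIdeal A) f = Ideal.Quotient.mk (squaresIdeal A) g ↔
      ∀ m : ℕ →₀ ℕ, (∀ k, m k ≤ 1) → coeff m f = coeff m g := by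
  rw [Ideal.Quotient.eq]
  refine forall₂_congr fun m _ => ?_
  rw [map_sub, sub_eq_zero]

theorem coeff_elemSymSeries (m : ℕ →₀ ℕ) (i : ℕ) :
    coeff m (elemSymSeries A i) = if (∀ k, m k ≤ 1) ∧ m.support.card = i then 1 else 0 :=
  rfl

theorem coeff_elemSymSeries_of_le_one {m : ℕ →₀ ℕ} (hm : ∀ k, m k ≤ 1) (i : ℕ) :
    coeff m (elemSymSeries A i) = if m.support.card = i then 1 else 0 :=
  if_congr (and_iff_right hm) rfl rfl

theorem elemSymSeries_zero : elemSymSeries A 0 = 1 := by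
  ext m
  rw [coeff_elemSymSeries, coeff_one]
  by_cases hm : m = 0 <;> simp [hm]

theorem coeff_elemSymSeries_one_mul (m : ℕ →₀ ℕ) (f : MvPowerSeries ℕ A) :
    coeff m (elemSymSeries A 1 * f) = ∑ x ∈ m.support, coeff (m - single x 1) f := by
  rw [coeff_mul]
  refine (Finset.sum_of_injOn (fun x => (single x 1, m - single x 1)) ?_ ?_ ?_ ?_).symm
  · intro x _ y _ h
    exact (single_left_inj one_ne_zero).mp (congrArg Prod.fst h)
  · intro x hx
    have hle : single x 1 ≤ m :=
      single_le_iff.mpr (Nat.one_le_iff_ne_zero.mpr (mem_support_iff.mp hx))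
    exact Finset.HasAntidiagonal.mem_antidiagonal.mpr (add_tsub_cancel_of_le hle)
  · rintro ⟨p₁, p₂⟩ hp hp_notMem
    obtain rfl : p₁ + p₂ = m := Finset.HasAntidiagonal.mem_antidiagonal.mp hp
    rw [coeff_elemSymSeries, ite_mul, one_mul, zero_mul, ite_eq_right_iff,
      le_one_and_card_support_eq_one_iff]
    rintro ⟨x, rfl⟩
    exact absurd ⟨x, by simp, by simp⟩ hp_notMem
  · intro x _
    rw [coeff_elemSymSeries, if_pos (le_one_and_card_support_eq_one_iff.mpr ⟨x, rfl⟩), one_mul]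

theorem coeff_elemSymSeries_one_mul_elemSymSeries {m : ℕ →₀ ℕ} (hm : ∀ k, m k ≤ 1) (n : ℕ) :
    coeff m (elemSymSeries A 1 * elemSymSeries A n) =
      (n + 1) • coeff m (elemSymSeries A (n + 1)) := by
  have hterm : ∀ x ∈ m.support,
      coeff (m - single x 1) (elemSymSeries A n) = if m.support.card = n + 1 then 1 else 0 := by
    intro x hx
    have hmx : m x = 1 := le_antisymm (hm x) (Nat.one_le_iff_ne_zero.mpr (mem_support_iff.mp hx))
    have herase : m - single x 1 = m.erase x := by
      ext k
      rcases eq_or_ne k x with rfl | hk <;> simp [*]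
    have hcard := Finset.card_pos.mpr ⟨x, hx⟩
    have herase_le_one : ∀ k, m.erase x k ≤ 1 := fun k => by
      rw [erase_apply]
      split_ifs
      exacts [zero_le_one, hm k]
    rw [herase, coeff_elemSymSeries_of_le_one herase_le_one, support_erase,
      Finset.card_erase_of_mem hx]
    exact if_congr (by omega) rfl rfl
  rw [coeff_elemSymSeries_one_mul, Finset.sum_congr rfl hterm, Finset.sum_const,
    coeff_elemSymSeries_of_le_one hm]
  split_ifs with h <;> simp [h]

theorem mk_elemSymSeries_one_mul (n : ℕ) :
    Ideal.Quotient.mk (squaresIdeal A) (elemSymSeries A 1) *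
        Ideal.Quotient.mk (squaresIdeal A) (elemSymSeries A n) =
      (n + 1) • Ideal.Quotient.mk (squaresIdeal A) (elemSymSeries A (n + 1)) := by
  rw [← map_mul, ← map_nsmul, mk_squaresIdeal_eq_iff]
  intro m hm
  rw [coeff_elemSymSeries_one_mul_elemSymSeries hm, map_nsmul]

theorem mk_elemSymSeries_one_pow (n : ℕ) :
    Ideal.Quotient.mk (squaresIdeal A) (elemSymSeries A 1) ^ n =
      n.factorial • Ideal.Quotient.mk (squaresIdeal A) (elemSymSeries A n) := by
  induction n with
  | zero => simp [elemSymSeries_zero]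
  | succ n ih =>
    rw [pow_succ', ih, mul_smul_comm, mk_elemSymSeries_one_mul, smul_smul, Nat.factorial_succ,
      mul_comm]

theorem coeff_elemSymSeries_one_pow {m : ℕ →₀ ℕ} (hm : ∀ k, m k ≤ 1) (n : ℕ) :
    coeff m (elemSymSeries A 1 ^ n) = n.factorial • coeff m (elemSymSeries A n) := by
  rw [← map_nsmul]
  refine mk_squaresIdeal_eq_iff.mp ?_ m hm
  rw [map_pow, map_nsmul, mk_elemSymSeries_one_pow]

theorem coeff_aeval_elemSymSeries_one {m : ℕ →₀ ℕ} (hm : ∀ k, m k ≤ 1) (p : Polynomial A) :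
    coeff m (Polynomial.aeval (elemSymSeries A 1) p) =
      m.support.card.factorial • p.coeff m.support.card := by
  rw [Polynomial.aeval_eq_sum_range'
    (Nat.lt_succ_of_le (Nat.le_add_right p.natDegree m.support.card)), map_sum]
  simp only [coeff_smul, coeff_elemSymSeries_one_pow hm, coeff_elemSymSeries_of_le_one hm,
    smul_ite, smul_zero, mul_ite, mul_zero, Finset.sum_ite_eq, Finset.mem_range]
  rw [if_pos (by omega), nsmul_one, nsmul_eq_mul, mul_comm]

variable [Algebra ℚ A]

theorem injective_aeval_mk_elemSymSeries_one :
    Function.Injective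
      (Polynomial.aeval (R := A) (Ideal.Quotient.mk (squaresIdeal A) (elemSymSeries A 1))) := by
  rw [injective_iff_map_eq_zero]
  intro p hp
  rw [← Ideal.Quotient.mkₐ_eq_mk A, Polynomial.aeval_algHom_apply, Ideal.Quotient.mkₐ_eq_mk,
    ← map_zero (Ideal.Quotient.mk (squaresIdeal A)), mk_squaresIdeal_eq_iff] at hp
  ext n
  obtain ⟨m, hm, rfl⟩ := exists_le_one_card_support_eq n
  have hfactorial : IsUnit (m.support.card.factorial : A) := by
    simpa using (isUnit_iff_ne_zero.mpr (Nat.cast_ne_zero.mpr (Nat.factorial_ne_zero _))).map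
      (algebraMap ℚ A)
  have hcoeff := hp m hm
  rw [coeff_aeval_elemSymSeries_one hm, map_zero, nsmul_eq_mul] at hcoeff
  exact hfactorial.mul_right_eq_zero.mp hcoeff

theorem mk_elemSymSeries_eq_inv_factorial_smul_pow (n : ℕ) :
    Ideal.Quotient.mk (squaresIdeal A) (elemSymSeries A n) =
      (n.factorial : ℚ)⁻¹ • Ideal.Quotient.mk (squaresIdeal A) (elemSymSeries A 1) ^ n := by
  rw [mk_elemSymSeries_one_pow, ← Nat.cast_smul_eq_nsmul ℚ, smul_smul,
    inv_mul_cancel₀ (Nat.cast_ne_zero.mpr (Nat.factorial_ne_zero n)), one_smul]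

theorem adjoin_range_mk_elemSymSeries_succ :
    Algebra.adjoin A (Set.range fun n : ℕ =>
        Ideal.Quotient.mk (squaresIdeal A) (elemSymSeries A (n + 1))) =
      Algebra.adjoin A {Ideal.Quotient.mk (squaresIdeal A) (elemSymSeries A 1)} := by
  refine le_antisymm (Algebra.adjoin_le ?_) (Algebra.adjoin_le ?_)
  · rintro _ ⟨n, rfl⟩
    dsimp only
    rw [mk_elemSymSeries_eq_inv_factorial_smul_pow (n + 1), ← algebraMap_smul A]
    exact Subalgebra.smul_mem _ (pow_mem (Algebra.self_mem_adjoin_singleton A _) _) _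
  · exact Set.singleton_subset_iff.mpr (Algebra.subset_adjoin ⟨0, rfl⟩)

end

/-- Let `A` be a commutative `ℚ`-algebra and `R = A[[ε₁, ε₂, …]]/(ε_i²)`.
The `A`-algebra homomorphism `A[X] → R` determined by `X ↦ e₁` sends `Xⁿ` to `n! · e_n`;
hence it is injective with range the subalgebra `A⟨e₁, e₂, …⟩` generated by the elementary
symmetric series (so it extends to an isomorphism from the divided-power polynomial algebra
onto `A⟨e₁, e₂, …⟩`), and `e_n = e₁ⁿ / n!` for all `n`. -/
theorem polynomial_aeval_elemSymSeries (A : Type*) [CommRing A] [Algebra ℚ A] :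
    (∀ n : ℕ,
      Polynomial.aeval (Ideal.Quotient.mk (squaresIdeal A) (elemSymSeries A 1))
          ((Polynomial.X : Polynomial A) ^ n) =
        n.factorial • Ideal.Quotient.mk (squaresIdeal A) (elemSymSeries A n)) ∧
    Function.Injective
      (Polynomial.aeval (Ideal.Quotient.mk (squaresIdeal A) (elemSymSeries A 1)) :
        Polynomial A →ₐ[A] MvPowerSeries ℕ A ⧸ squaresIdeal A) ∧
    (Polynomial.aeval (Ideal.Quotient.mk (squaresIdeal A) (elemSymSeries A 1)) :
        Polynomial A →ₐ[A] MvPowerSeries ℕ A ⧸ squaresIdeal A).range =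
      Algebra.adjoin A
        (Set.range fun n : ℕ =>
          Ideal.Quotient.mk (squaresIdeal A) (elemSymSeries A (n + 1))) := by
  refine ⟨fun n => ?_, injective_aeval_mk_elemSymSeries_one, ?_⟩
  · rw [map_pow, Polynomial.aeval_X, mk_elemSymSeries_one_pow]
  · rw [← Algebra.adjoin_singleton_eq_range_aeval, adjoin_range_mk_elemSymSeries_succ]
end

section
/- Let k be a field with an iterative Hasse–Schmidt derivation (∂_i)_{i ≥ 0} (∂_0 = id, ∂_n(ab) = Σ_{i≤n} ∂_i(a)∂_{n−i}(b), ∂_i∂_j = C(i+j,i)∂_{i+j}) and a field automorphism σ commuting with every ∂_i. Let M be a difference module over (k, σ). For k ≥ 0 define τ_k M as the k-vector space generated by symbols ∂_i m (0 ≤ i ≤ k, m ∈ M) subject to ∂_i(m₁+m₂) = ∂_i m₁ + ∂_i m₂ and ∂_i(am) = Σ_{j=0}^i ∂_j(a)·∂_{i−j}m. Then the rule x·(∂_i m) = ∂_{i−1} m (with ∂_{−1}m = 0) defines on τ_k M the structure of a module over E_k = k[x]/(x^{k+1}), and the rule σ(∂_i m) = ∂_i(σ_M m) defines a well-defined additive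 bijection of τ_k M compatible with the E_k-action twisted by σ on coefficients. -/
open Finsupp

/-- The defining relations of the prolongation `τ_n M` of a module `M` over a field `K`
with Hasse–Schmidt derivation `δ`: the symbol `(i, m)` stands for `∂_i m`, the relations
are `∂_i (m₁ + m₂) = ∂_i m₁ + ∂_i m₂`, `∂_i (a • m) = Σ_{j ≤ i} ∂_j(a) · ∂_{i-j} m`
(for `i ≤ n`), and `∂_i m = 0` for `i > n`. -/
noncomputable def tauRel (K M : Type*) [Field K] [AddCommGroup M] [Module K M]
    (δ : ℕ → K → K) (n : ℕ) : Submodule K ((ℕ × M) →₀ K) :=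
  Submodule.span K
    ({v | ∃ (i : ℕ) (m₁ m₂ : M), i ≤ n ∧
        v = single (i, m₁ + m₂) (1 : K) - single (i, m₁) 1 - single (i, m₂) 1} ∪
     {v | ∃ (i : ℕ) (a : K) (m : M), i ≤ n ∧
        v = single (i, a • m) (1 : K) -
          ∑ j ∈ Finset.range (i + 1), single (i - j, m) (δ j a)} ∪
     {v | ∃ (i : ℕ) (m : M), n < i ∧ v = single (i, m) (1 : K)})

/-- The class of the generator `∂_i m` in `τ_n M`. -/
noncomputable def tauGen (K M : Type*) [Field K] [AddCommGroup M] [Module K M]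
    (δ : ℕ → K → K) (n : ℕ) (i : ℕ) (m : M) :
    ((ℕ × M) →₀ K) ⧸ tauRel K M δ n :=
  Submodule.Quotient.mk (single (i, m) (1 : K))

/-! The action of `x` and the map `σ` are induced by the evident maps on the free module on the
symbols `∂_i m`, so everything comes down to these maps preserving the relations. For the index
shift, the Leibniz relation for `∂_{i+1}(a • m)` is sent term by term to the Leibniz relation for
`∂_i(a • m)`, its last term `δ_{i+1}(a) ∂_{-1} m` dying. For the twist, `σ` commutes with every
`δ_j` and `σM` is `σ`-semilinear; the twist by `σ⁻¹, σM⁻¹` inverts it and preserves the relations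
for the same reason. -/

namespace Tau

section ShiftDown

variable {R ι : Type*} [Semiring R]

/-- The symbols `∂_i m` with `i > n` have to be sent to `0`: they vanish in `τ_n M`, whereas
`∂_{n+1} m ↦ ∂_n m` would not respect that. -/
noncomputable def shiftDown (n : ℕ) : ((ℕ × ι) →₀ R) →ₗ[R] ((ℕ × ι) →₀ R) :=
  Finsupp.lsum ℕ fun p => if p.1 = 0 ∨ n < p.1 then 0 else Finsupp.lsingle (p.1 - 1, p.2)

lemma shiftDown_single (n i : ℕ) (m : ι) (c : R) :
    shiftDown n (single (i, m) c) = if i = 0 ∨ n < i then 0 else single (i - 1, m) c := by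
  rw [shiftDown, Finsupp.lsum_single]
  split_ifs <;> simp

lemma shiftDown_pow_single_of_lt (n : ℕ) {k i : ℕ} (h : i < k) (m : ι) (c : R) :
    (shiftDown n ^ k) (single (i, m) c) = 0 := by
  induction k generalizing i with
  | zero => omega
  | succ k ih =>
    rw [pow_succ, Module.End.mul_apply, shiftDown_single]
    split_ifs
    · exact map_zero _
    · exact ih (by omega)

lemma shiftDown_pow_succ_self (n : ℕ) : (shiftDown n : _ →ₗ[R] (ℕ × ι) →₀ R) ^ (n + 1) = 0 := by
  refine Finsupp.lhom_ext fun ⟨i, m⟩ c => ?_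
  rcases le_or_gt i n with hi | hi
  · exact shiftDown_pow_single_of_lt n (Nat.lt_succ_of_le hi) m c
  · rw [pow_succ, Module.End.mul_apply, shiftDown_single, if_pos (Or.inr hi), map_zero]
    rfl

end ShiftDown

variable {K M : Type*} [Field K] [AddCommGroup M] [Module K M]

lemma tauRel_le_comap_shiftDown (δ : ℕ → K → K) (n : ℕ) :
    tauRel K M δ n ≤ (tauRel K M δ n).comap (shiftDown n) := by
  conv_lhs => rw [tauRel]
  rw [Submodule.span_le]
  rintro v ((⟨i, m₁, m₂, hi, rfl⟩ | ⟨i, a, m, hi, rfl⟩) | ⟨i, m, hi, rfl⟩) <;>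
    simp only [Submodule.mem_comap, SetLike.mem_coe, map_sub, map_sum, shiftDown_single]
  · rcases i with _ | i
    · simp
    · simp only [Nat.add_eq_zero_iff, one_ne_zero, and_false, false_or,
        if_neg (show ¬ n < i + 1 by omega), Nat.add_sub_cancel]
      exact Submodule.subset_span (Or.inl (Or.inl ⟨i, m₁, m₂, by omega, rfl⟩))
  · rcases i with _ | i
    · simp
    · have hterm : ∀ j ∈ Finset.range (i + 1),
          (if i + 1 - j = 0 ∨ n < i + 1 - j then 0 else single (i + 1 - j - 1, m) (δ j a))
            = single (i - j, m) (δ j a) := fun j hj => by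
        rw [Finset.mem_range] at hj
        rw [if_neg (by omega), show i + 1 - j - 1 = i - j by omega]
      rw [if_neg (by omega), Finset.sum_range_succ, if_pos (by omega), add_zero,
        Finset.sum_congr rfl hterm]
      exact Submodule.subset_span (Or.inl (Or.inr ⟨i, a, m, by omega, rfl⟩))
  · rw [if_pos (Or.inr hi)]
    exact Submodule.zero_mem _

/-- The action of `x ∈ E_n = K[x]/(x^{n+1})` on `τ_n M`. -/
noncomputable def tauShift (δ : ℕ → K → K) (n : ℕ) :
    Module.End K (((ℕ × M) →₀ K) ⧸ tauRel K M δ n) :=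
  (tauRel K M δ n).mapQ _ (shiftDown n) (tauRel_le_comap_shiftDown δ n)

lemma tauShift_tauGen_zero (δ : ℕ → K → K) (n : ℕ) (m : M) :
    tauShift δ n (tauGen K M δ n 0 m) = 0 := by
  rw [tauGen, tauShift, Submodule.mapQ_apply, shiftDown_single, if_pos (Or.inl rfl)]
  rfl

lemma tauShift_tauGen_succ (δ : ℕ → K → K) {n i : ℕ} (hi : i < n) (m : M) :
    tauShift δ n (tauGen K M δ n (i + 1) m) = tauGen K M δ n i m := by
  rw [tauGen, tauShift, Submodule.mapQ_apply, shiftDown_single, if_neg (by omega)]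
  rfl

lemma tauShift_pow_succ_self (δ : ℕ → K → K) (n : ℕ) :
    (tauShift δ n : Module.End K (((ℕ × M) →₀ K) ⧸ _)) ^ (n + 1) = 0 := by
  rw [tauShift, ← Submodule.mapQ_pow, ← Submodule.mapQ_zero]
  congr 1
  exact shiftDown_pow_succ_self n

section Twist

variable {σ σ' : K →+* K} [RingHomInvPair σ σ'] [RingHomInvPair σ' σ]

variable (σ) in
def selfSemilinearEquiv : K ≃ₛₗ[σ] K where
  toFun := σ
  invFun := σ'
  map_add' := σ.map_add
  map_smul' := σ.map_mul
  left_inv _ := RingHomInvPair.comp_apply_eq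
  right_inv _ := RingHomInvPair.comp_apply_eq₂

variable (e : M ≃ₛₗ[σ] M)

noncomputable def twist : ((ℕ × M) →₀ K) ≃ₛₗ[σ] ((ℕ × M) →₀ K) :=
  Finsupp.lcongr (Equiv.prodCongr (Equiv.refl ℕ) e.toEquiv) (selfSemilinearEquiv σ)

lemma twist_single (i : ℕ) (m : M) (c : K) :
    twist e (single (i, m) c) = single (i, e m) (σ c) := by
  simp [twist, selfSemilinearEquiv]

lemma twist_symm : (twist e).symm = twist e.symm := by
  rw [twist, lcongr_symm]
  rfl

lemma twist_shiftDown (n : ℕ) (v : (ℕ × M) →₀ K) :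
    twist e (shiftDown n v) = shiftDown n (twist e v) := by
  induction v using Finsupp.induction_linear with
  | zero => simp
  | add f g hf hg => rw [map_add, map_add, hf, hg, map_add, map_add]
  | single p c =>
    obtain ⟨i, m⟩ := p
    rw [shiftDown_single, twist_single, shiftDown_single]
    split_ifs
    · exact map_zero _
    · exact twist_single e _ _ _

variable (δ : ℕ → K → K) (n : ℕ)

lemma tauRel_le_comap_twist (hσδ : ∀ i a, σ (δ i a) = δ i (σ a)) :
    tauRel K M δ n ≤ (tauRel K M δ n).comap (twist e : _ →ₛₗ[σ] _) := by
  conv_lhs => rw [tauRel]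
  rw [Submodule.span_le]
  rintro v ((⟨i, m₁, m₂, hi, rfl⟩ | ⟨i, a, m, hi, rfl⟩) | ⟨i, m, hi, rfl⟩) <;>
    simp only [Submodule.mem_comap, SetLike.mem_coe, map_sub, map_sum, LinearEquiv.coe_coe,
      twist_single, map_one]
  · exact Submodule.subset_span (Or.inl (Or.inl ⟨i, e m₁, e m₂, hi, by rw [map_add]⟩))
  · refine Submodule.subset_span (Or.inl (Or.inr ⟨i, σ a, e m, hi, ?_⟩))
    simp only [LinearEquiv.map_smulₛₗ, hσδ]
  · exact Submodule.subset_span (Or.inr ⟨i, e m, hi, rfl⟩)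

lemma map_twist_tauRel (hσδ : ∀ i a, σ (δ i a) = δ i (σ a)) :
    (tauRel K M δ n).map (twist e : _ →ₛₗ[σ] _) = tauRel K M δ n := by
  have hσ'δ : ∀ i a, σ' (δ i a) = δ i (σ' a) := fun i =>
    Function.Semiconj.inverse_left (hσδ i) (fun _ => RingHomInvPair.comp_apply_eq)
      (fun _ => RingHomInvPair.comp_apply_eq₂)
  refine le_antisymm (Submodule.map_le_iff_le_comap.2 (tauRel_le_comap_twist e δ n hσδ)) ?_
  rw [Submodule.map_equiv_eq_comap_symm, twist_symm]
  exact tauRel_le_comap_twist e.symm δ n hσ'δ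

variable (hσδ : ∀ i a, σ (δ i a) = δ i (σ a))

noncomputable def tauTwist :
    (((ℕ × M) →₀ K) ⧸ tauRel K M δ n) ≃ₛₗ[σ] (((ℕ × M) →₀ K) ⧸ tauRel K M δ n) :=
  Submodule.Quotient.equiv _ _ (twist e) (map_twist_tauRel e δ n hσδ)

lemma tauTwist_tauGen (i : ℕ) (m : M) :
    tauTwist e δ n hσδ (tauGen K M δ n i m) = tauGen K M δ n i (e m) := by
  rw [tauGen, tauTwist, Submodule.Quotient.equiv_apply, Submodule.mapQ_apply,
    LinearEquiv.coe_coe, twist_single, map_one]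
  rfl

lemma tauTwist_tauShift (v : ((ℕ × M) →₀ K) ⧸ tauRel K M δ n) :
    tauTwist e δ n hσδ (tauShift δ n v) = tauShift δ n (tauTwist e δ n hσδ v) := by
  induction v using Submodule.Quotient.induction_on with
  | H w => exact congrArg Submodule.Quotient.mk (twist_shiftDown e n w)

end Twist

end Tau

open Tau in
theorem tau_module_and_difference_structure_general
    (K M : Type*) [Field K] [AddCommGroup M] [Module K M]
    (δ : ℕ → K → K)
    (σ : K ≃+* K) (hσδ : ∀ i a, σ (δ i a) = δ i (σ a))
    (σM : M ≃+ M) (hσM : ∀ (a : K) (m : M), σM (a • m) = σ a • σM m)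
    (n : ℕ) :
    ∃ (X : Module.End K (((ℕ × M) →₀ K) ⧸ tauRel K M δ n))
      (S : (((ℕ × M) →₀ K) ⧸ tauRel K M δ n) ≃+ (((ℕ × M) →₀ K) ⧸ tauRel K M δ n)),
      (∀ m : M, X (tauGen K M δ n 0 m) = 0) ∧
      (∀ i : ℕ, i < n → ∀ m : M, X (tauGen K M δ n (i + 1) m) = tauGen K M δ n i m) ∧
      X ^ (n + 1) = 0 ∧
      (∀ (i : ℕ) (m : M), S (tauGen K M δ n i m) = tauGen K M δ n i (σM m)) ∧
      (∀ (a : K) v, S (a • v) = σ a • S v) ∧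
      (∀ v, S (X v) = X (S v)) := by
  have := RingHomInvPair.of_ringEquiv σ
  have := RingHomInvPair.symm (σ : K →+* K) σ.symm
  let e : M ≃ₛₗ[(σ : K →+* K)] M := { σM with map_smul' := hσM }
  exact ⟨tauShift δ n, (tauTwist e δ n hσδ).toAddEquiv, tauShift_tauGen_zero δ n,
    fun i hi => tauShift_tauGen_succ δ hi, tauShift_pow_succ_self δ n,
    tauTwist_tauGen e δ n hσδ, (tauTwist e δ n hσδ).map_smulₛₗ,
    tauTwist_tauShift e δ n hσδ⟩

/-- Let `(K, σ, (∂_i))` be an iterative difference–Hasse–Schmidt field and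
`(M, σM)` a difference module over `(K, σ)`.  Then on the prolongation
`τ_n M = ⟨∂_i m : i ≤ n, m ∈ M⟩` the rule `x • ∂_i m = ∂_{i-1} m` (with `∂_{-1} m = 0`)
is a well-defined `K`-linear endomorphism `X` with `X^{n+1} = 0` (so `τ_n M` is a module
over `E_n = K[x]/(x^{n+1})`), and `σ(∂_i m) = ∂_i (σM m)` is a well-defined additive
bijection, `σ`-semilinear over `K` and commuting with the `E_n`-action. -/
theorem tau_module_and_difference_structure
    (K M : Type*) [Field K] [AddCommGroup M] [Module K M] [FiniteDimensional K M]
    (δ : ℕ → K → K)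
    (h0 : ∀ a, δ 0 a = a)
    (hadd : ∀ i a b, δ i (a + b) = δ i a + δ i b)
    (hmul : ∀ i a b, δ i (a * b) = ∑ j ∈ Finset.range (i + 1), δ j a * δ (i - j) b)
    (hiter : ∀ i j a, δ i (δ j a) = ((i + j).choose i : K) * δ (i + j) a)
    (σ : K ≃+* K) (hσδ : ∀ i a, σ (δ i a) = δ i (σ a))
    (σM : M ≃+ M) (hσM : ∀ (a : K) (m : M), σM (a • m) = σ a • σM m)
    (n : ℕ) :
    ∃ (X : Module.End K (((ℕ × M) →₀ K) ⧸ tauRel K M δ n))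
      (S : (((ℕ × M) →₀ K) ⧸ tauRel K M δ n) ≃+ (((ℕ × M) →₀ K) ⧸ tauRel K M δ n)),
      (∀ m : M, X (tauGen K M δ n 0 m) = 0) ∧
      (∀ i : ℕ, i < n → ∀ m : M, X (tauGen K M δ n (i + 1) m) = tauGen K M δ n i m) ∧
      X ^ (n + 1) = 0 ∧
      (∀ (i : ℕ) (m : M), S (tauGen K M δ n i m) = tauGen K M δ n i (σM m)) ∧
      (∀ (a : K) v, S (a • v) = σ a • S v) ∧
      (∀ v, S (X v) = X (S v)) :=
  tau_module_and_difference_structure_general K M δ σ hσδ σM hσM n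
end

section
/- With notation as in the previous statement, the E_k-module τ_k M is injective over E_k = k[x]/(x^{k+1}); equivalently, every element of τ_k M annihilated by x^l lies in the image of multiplication by x^{k+1−l}. -/
open Finsupp

/-!
Choose a basis `(b_α)` of `M`. The relations give
`∂_i (∑ c_α b_α) = ∑_{t ≤ i} ∑_α δ_{i-t}(c_α) ∂_t b_α`, and conversely these formulas define
coordinate maps `Φ_t : τ_n M → M` (the Leibniz rule for `δ` is what makes them respect the
relations). Together with the maps `Γ_t : m ↦ ∑ c_α ∂_t b_α` they exhibit `τ_n M` as
`⊕_{t ≤ n} ∂_t(M)`, on which `x` shifts `∂_{t+1}(M)` onto `∂_t(M)` and kills `∂_0(M)`: a free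
`K[x]/(x^{n+1})`-module. In a free module, `x^l v = 0` forces `Φ_t v = Φ_{t-l} (x^l v) = 0` for
`t ≥ l`, and shifting the remaining coordinates up by `n + 1 - l` gives a preimage under
`x^{n+1-l}`.
-/

open Finset

theorem Module.End.exists_pow_apply_eq_of_shift_decomposition {R V M : Type*} [Semiring R]
    [AddCommMonoid V] [Module R V] [AddCommMonoid M] [Module R M] {n : ℕ}
    (X : Module.End R V) (Φ : ℕ → V →ₗ[R] M) (Γ : ℕ → M →ₗ[R] V)
    (hΦ : ∀ t, Φ (t + 1) = Φ t ∘ₗ X) (hΓ : ∀ t < n, X ∘ₗ Γ (t + 1) = Γ t)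
    (hsum : ∑ t ∈ range (n + 1), Γ t ∘ₗ Φ t = LinearMap.id)
    {l : ℕ} (hl : l ≤ n + 1) {v : V} (hv : (X ^ l) v = 0) :
    ∃ w, (X ^ (n + 1 - l)) w = v := by
  have hΦpow : ∀ s t, Φ (t + s) = Φ t ∘ₗ X ^ s := by
    intro s
    induction s with
    | zero => simp [Module.End.one_eq_id]
    | succ s ih =>
      intro t
      rw [← add_assoc, hΦ, ih, LinearMap.comp_assoc, pow_succ, Module.End.mul_eq_comp]
  have hΓpow : ∀ s t, t + s ≤ n → (X ^ s) ∘ₗ Γ (t + s) = Γ t := by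
    intro s
    induction s with
    | zero => simp [Module.End.one_eq_id]
    | succ s ih =>
      intro t hts
      rw [← add_assoc, pow_succ, Module.End.mul_eq_comp, LinearMap.comp_assoc,
        hΓ _ (by omega), ih t (by omega)]
  have hvanish : ∀ t, l ≤ t → Φ t v = 0 := fun t hlt => by
    rw [← Nat.sub_add_cancel hlt, hΦpow, LinearMap.comp_apply, hv, map_zero]
  refine ⟨∑ t ∈ range l, Γ (t + (n + 1 - l)) (Φ t v), ?_⟩
  calc (X ^ (n + 1 - l)) (∑ t ∈ range l, Γ (t + (n + 1 - l)) (Φ t v))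
      = ∑ t ∈ range l, Γ t (Φ t v) := by
        rw [map_sum]
        refine sum_congr rfl fun t ht => ?_
        rw [← LinearMap.comp_apply, hΓpow _ _ (by grind)]
    _ = ∑ t ∈ range (n + 1), Γ t (Φ t v) :=
        sum_subset (range_subset_range.mpr hl) fun t _ ht => by
          rw [hvanish t (by simpa using ht), map_zero]
    _ = v := by simpa using LinearMap.congr_fun hsum v

section Prolongation

variable {K M : Type*} [Field K] [AddCommGroup M] [Module K M] (δ : ℕ → K → K) (n : ℕ)

theorem mk_single_eq_smul_tauGen (i : ℕ) (m : M) (c : K) :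
    (Submodule.Quotient.mk (single (i, m) c) : ((ℕ × M) →₀ K) ⧸ tauRel K M δ n) =
      c • tauGen K M δ n i m := by
  rw [tauGen, ← Submodule.Quotient.mk_smul, smul_single', mul_one]

theorem tauGen_add {i : ℕ} (hi : i ≤ n) (m₁ m₂ : M) :
    tauGen K M δ n i (m₁ + m₂) = tauGen K M δ n i m₁ + tauGen K M δ n i m₂ := by
  have hrel := (Submodule.Quotient.mk_eq_zero (tauRel K M δ n)).mpr
    (Submodule.subset_span (Or.inl (Or.inl ⟨i, m₁, m₂, hi, rfl⟩)))
  rwa [Submodule.Quotient.mk_sub, Submodule.Quotient.mk_sub, sub_sub, sub_eq_zero] at hrel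

theorem tauGen_smul {i : ℕ} (hi : i ≤ n) (a : K) (m : M) :
    tauGen K M δ n i (a • m) = ∑ j ∈ range (i + 1), δ j a • tauGen K M δ n (i - j) m := by
  have hrel := (Submodule.Quotient.mk_eq_zero (tauRel K M δ n)).mpr
    (Submodule.subset_span (Or.inl (Or.inr ⟨i, a, m, hi, rfl⟩)))
  rw [Submodule.Quotient.mk_sub, sub_eq_zero, mk_single_eq_smul_tauGen, one_smul] at hrel
  rw [hrel, ← Submodule.mkQ_apply, map_sum]
  exact sum_congr rfl fun j _ => mk_single_eq_smul_tauGen δ n _ m _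

theorem tauGen_eq_zero_of_lt {i : ℕ} (hi : n < i) (m : M) : tauGen K M δ n i m = 0 :=
  (Submodule.Quotient.mk_eq_zero _).mpr (Submodule.subset_span (Or.inr ⟨i, m, hi, rfl⟩))

theorem tauHom_ext {N : Type*} [AddCommGroup N] [Module K N]
    {f g : (((ℕ × M) →₀ K) ⧸ tauRel K M δ n) →ₗ[K] N}
    (h : ∀ i m, f (tauGen K M δ n i m) = g (tauGen K M δ n i m)) : f = g :=
  Submodule.linearMap_qext _ <| Finsupp.lhom_ext fun ⟨i, m⟩ c => by
    simp only [LinearMap.comp_apply, Submodule.mkQ_apply, mk_single_eq_smul_tauGen, map_smul, h]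

noncomputable def tauLift {N : Type*} [AddCommGroup N] [Module K N] (f : ℕ → M → N)
    (hadd : ∀ i ≤ n, ∀ m₁ m₂, f i (m₁ + m₂) = f i m₁ + f i m₂)
    (hsmul : ∀ i ≤ n, ∀ a m, f i (a • m) = ∑ j ∈ range (i + 1), δ j a • f (i - j) m)
    (hhigh : ∀ i, n < i → ∀ m, f i m = 0) :
    (((ℕ × M) →₀ K) ⧸ tauRel K M δ n) →ₗ[K] N :=
  (tauRel K M δ n).liftQ (Finsupp.linearCombination K fun p => f p.1 p.2) <| by
    rw [tauRel, Submodule.span_le]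
    rintro v ((⟨i, m₁, m₂, hi, rfl⟩ | ⟨i, a, m, hi, rfl⟩) | ⟨i, m, hi, rfl⟩) <;>
      simp [Finsupp.linearCombination_single, hadd, hsmul, hhigh, hi]

theorem tauLift_tauGen {N : Type*} [AddCommGroup N] [Module K N] (f : ℕ → M → N)
    (hadd : ∀ i ≤ n, ∀ m₁ m₂, f i (m₁ + m₂) = f i m₁ + f i m₂)
    (hsmul : ∀ i ≤ n, ∀ a m, f i (a • m) = ∑ j ∈ range (i + 1), δ j a • f (i - j) m)
    (hhigh : ∀ i, n < i → ∀ m, f i m = 0) (i : ℕ) (m : M) :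
    tauLift δ n f hadd hsmul hhigh (tauGen K M δ n i m) = f i m := by
  simp [tauLift, tauGen]

end Prolongation

section Coordinates

variable {K M : Type*} [Field K] [AddCommGroup M] [Module K M] (δ : ℕ → K → K) (n : ℕ)
  {ι : Type*} (b : Module.Basis ι K M)

noncomputable def coordDeriv (j : ℕ) (m : M) : M :=
  (b.repr m).sum fun α c => δ j c • b α

variable {δ}

theorem coordDeriv_add (hadd : ∀ i a b, δ i (a + b) = δ i a + δ i b) (j : ℕ) (m₁ m₂ : M) :
    coordDeriv δ b j (m₁ + m₂) = coordDeriv δ b j m₁ + coordDeriv δ b j m₂ := by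
  have hδ0 : δ j 0 = 0 := by simpa using hadd j 0 0
  rw [coordDeriv, map_add]
  exact sum_add_index' (fun α => by rw [hδ0, zero_smul]) fun α c₁ c₂ => by rw [hadd, add_smul]

theorem coordDeriv_smul (hadd : ∀ i a b, δ i (a + b) = δ i a + δ i b)
    (hmul : ∀ i a b, δ i (a * b) = ∑ j ∈ range (i + 1), δ j a * δ (i - j) b)
    (i : ℕ) (a : K) (m : M) :
    coordDeriv δ b i (a • m) = ∑ j ∈ range (i + 1), δ j a • coordDeriv δ b (i - j) m := by
  have hδ0 : δ i 0 = 0 := by simpa using hadd i 0 0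
  rw [coordDeriv, map_smul, sum_smul_index fun α => by rw [hδ0, zero_smul]]
  simp only [hmul, Finset.sum_smul, mul_smul, coordDeriv, Finsupp.smul_sum]
  exact Finset.sum_comm

end Coordinates

section Decomposition

variable {K M : Type*} [Field K] [AddCommGroup M] [Module K M] (δ : ℕ → K → K) (n : ℕ)
  {ι : Type*} (b : Module.Basis ι K M)

/-- The component in `∂_t(M)` of `∂_i m`, in the coordinates given by `b`. -/
noncomputable def genCoord (t i : ℕ) (m : M) : M :=
  if t ≤ i ∧ i ≤ n then coordDeriv δ b (i - t) m else 0

variable {δ n}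

theorem genCoord_add (hadd : ∀ i a b, δ i (a + b) = δ i a + δ i b) (t i : ℕ) (m₁ m₂ : M) :
    genCoord δ n b t i (m₁ + m₂) = genCoord δ n b t i m₁ + genCoord δ n b t i m₂ := by
  unfold genCoord
  split_ifs
  · exact coordDeriv_add b hadd _ m₁ m₂
  · rw [add_zero]

theorem genCoord_smul (hadd : ∀ i a b, δ i (a + b) = δ i a + δ i b)
    (hmul : ∀ i a b, δ i (a * b) = ∑ j ∈ range (i + 1), δ j a * δ (i - j) b)
    (t : ℕ) {i : ℕ} (hi : i ≤ n) (a : K) (m : M) :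
    genCoord δ n b t i (a • m) = ∑ j ∈ range (i + 1), δ j a • genCoord δ n b t (i - j) m := by
  by_cases ht : t ≤ i
  · rw [genCoord, if_pos ⟨ht, hi⟩, coordDeriv_smul b hadd hmul,
      ← sum_subset (range_subset_range.mpr (by omega : i - t + 1 ≤ i + 1))]
    · refine sum_congr rfl fun j hj => ?_
      rw [genCoord, if_pos (by grind), Nat.sub_right_comm]
    · intro j _ hj
      rw [genCoord, if_neg (by grind), smul_zero]
  · rw [genCoord, if_neg (by omega)]
    exact (sum_eq_zero fun j _ => by rw [genCoord, if_neg (by omega), smul_zero]).symm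

theorem genCoord_of_lt (t : ℕ) {i : ℕ} (hi : n < i) (m : M) : genCoord δ n b t i m = 0 :=
  if_neg (by omega)

variable (δ n)

noncomputable def tauCoord (hadd : ∀ i a b, δ i (a + b) = δ i a + δ i b)
    (hmul : ∀ i a b, δ i (a * b) = ∑ j ∈ range (i + 1), δ j a * δ (i - j) b) (t : ℕ) :
    (((ℕ × M) →₀ K) ⧸ tauRel K M δ n) →ₗ[K] M :=
  tauLift δ n (genCoord δ n b t) (fun i _ => genCoord_add b hadd t i)
    (fun _ hi => genCoord_smul b hadd hmul t hi) (fun _ hi => genCoord_of_lt b t hi)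

noncomputable def tauEmbed (t : ℕ) : M →ₗ[K] ((ℕ × M) →₀ K) ⧸ tauRel K M δ n :=
  b.constr K fun α => tauGen K M δ n t (b α)

variable {δ n}

theorem tauCoord_tauGen (hadd : ∀ i a b, δ i (a + b) = δ i a + δ i b)
    (hmul : ∀ i a b, δ i (a * b) = ∑ j ∈ range (i + 1), δ j a * δ (i - j) b) (t i : ℕ) (m : M) :
    tauCoord δ n b hadd hmul t (tauGen K M δ n i m) = genCoord δ n b t i m :=
  tauLift_tauGen δ n _ _ _ _ i m

theorem tauEmbed_coordDeriv (t j : ℕ) (m : M) :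
    tauEmbed δ n b t (coordDeriv δ b j m) =
      (b.repr m).sum fun α c => δ j c • tauGen K M δ n t (b α) := by
  simp [tauEmbed, coordDeriv, map_finsuppSum]

theorem tauGen_eq_sum_tauEmbed {i : ℕ} (hi : i ≤ n) (m : M) :
    tauGen K M δ n i m = ∑ t ∈ range (i + 1), tauEmbed δ n b t (coordDeriv δ b (i - t) m) := by
  calc tauGen K M δ n i m
      = tauGen K M δ n i ((b.repr m).sum fun α c => c • b α) := by
        rw [← linearCombination_apply, b.linearCombination_repr]
    _ = (b.repr m).sum fun α c => tauGen K M δ n i (c • b α) :=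
        map_finsuppSum (AddMonoidHom.mk' (tauGen K M δ n i) (tauGen_add δ n hi)) _ _
    _ = ∑ j ∈ range (i + 1), (b.repr m).sum fun α c => δ j c • tauGen K M δ n (i - j) (b α) := by
        simp only [tauGen_smul δ n hi]
        exact Finset.sum_comm
    _ = ∑ t ∈ range (i + 1), tauEmbed δ n b t (coordDeriv δ b (i - t) m) := by
        rw [← sum_range_reflect]
        refine sum_congr rfl fun t ht => ?_
        rw [tauEmbed_coordDeriv, Nat.add_sub_cancel, Nat.sub_sub_self (by grind)]

theorem tauCoord_succ (hadd : ∀ i a b, δ i (a + b) = δ i a + δ i b)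
    (hmul : ∀ i a b, δ i (a * b) = ∑ j ∈ range (i + 1), δ j a * δ (i - j) b)
    {X : Module.End K (((ℕ × M) →₀ K) ⧸ tauRel K M δ n)}
    (hX0 : ∀ m : M, X (tauGen K M δ n 0 m) = 0)
    (hXsucc : ∀ i : ℕ, i < n → ∀ m : M, X (tauGen K M δ n (i + 1) m) = tauGen K M δ n i m)
    (t : ℕ) : tauCoord δ n b hadd hmul (t + 1) = tauCoord δ n b hadd hmul t ∘ₗ X :=
  tauHom_ext δ n fun i m => by
    rw [LinearMap.comp_apply, tauCoord_tauGen]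
    rcases i with _ | i
    · rw [hX0, map_zero, genCoord, if_neg (by omega)]
    rcases le_or_gt (i + 1) n with hi | hi
    · rw [hXsucc i hi m, tauCoord_tauGen]
      simp [genCoord, hi, Nat.le_of_succ_le hi]
    · rw [tauGen_eq_zero_of_lt δ n hi, map_zero, map_zero, genCoord_of_lt b _ hi]

theorem comp_tauEmbed_succ {X : Module.End K (((ℕ × M) →₀ K) ⧸ tauRel K M δ n)}
    (hXsucc : ∀ i : ℕ, i < n → ∀ m : M, X (tauGen K M δ n (i + 1) m) = tauGen K M δ n i m)
    {t : ℕ} (ht : t < n) : X ∘ₗ tauEmbed δ n b (t + 1) = tauEmbed δ n b t :=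
  b.ext fun α => by simp [tauEmbed, hXsucc t ht]

theorem sum_tauEmbed_comp_tauCoord (hadd : ∀ i a b, δ i (a + b) = δ i a + δ i b)
    (hmul : ∀ i a b, δ i (a * b) = ∑ j ∈ range (i + 1), δ j a * δ (i - j) b) :
    ∑ t ∈ range (n + 1), tauEmbed δ n b t ∘ₗ tauCoord δ n b hadd hmul t = LinearMap.id :=
  tauHom_ext δ n fun i m => by
    simp only [LinearMap.sum_apply, LinearMap.comp_apply, tauCoord_tauGen,
      LinearMap.id_apply]
    rcases le_or_gt i n with hi | hi
    · rw [tauGen_eq_sum_tauEmbed b hi,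
        ← sum_subset (range_subset_range.mpr (by omega : i + 1 ≤ n + 1))]
      · exact sum_congr rfl fun t ht => by rw [genCoord, if_pos (by grind)]
      · intro t _ ht
        rw [genCoord, if_neg (by grind), map_zero]
    · rw [tauGen_eq_zero_of_lt δ n hi]
      exact sum_eq_zero fun t _ => by rw [genCoord_of_lt b t hi, map_zero]

end Decomposition

theorem tau_injective_module_general
    (K M : Type*) [Field K] [AddCommGroup M] [Module K M]
    (δ : ℕ → K → K)
    (hadd : ∀ i a b, δ i (a + b) = δ i a + δ i b)
    (hmul : ∀ i a b, δ i (a * b) = ∑ j ∈ Finset.range (i + 1), δ j a * δ (i - j) b)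
    (n : ℕ)
    (X : Module.End K (((ℕ × M) →₀ K) ⧸ tauRel K M δ n))
    (hX0 : ∀ m : M, X (tauGen K M δ n 0 m) = 0)
    (hXsucc : ∀ i : ℕ, i < n → ∀ m : M, X (tauGen K M δ n (i + 1) m) = tauGen K M δ n i m) :
    ∀ l : ℕ, l ≤ n + 1 →
      ∀ v : ((ℕ × M) →₀ K) ⧸ tauRel K M δ n,
        (X ^ l) v = 0 → ∃ w, (X ^ (n + 1 - l)) w = v := by
  intro l hl v hv
  let b := Module.Basis.ofVectorSpace K M
  exact X.exists_pow_apply_eq_of_shift_decomposition (tauCoord δ n b hadd hmul) (tauEmbed δ n b)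
    (tauCoord_succ b hadd hmul hX0 hXsucc) (fun _ ht => comp_tauEmbed_succ b hXsucc ht)
    (sum_tauEmbed_comp_tauCoord b hadd hmul) hl hv

/-- With notation as in the previous statement, the `E_n`-module `τ_n M`
(with `x` acting by `X : ∂_i m ↦ ∂_{i-1} m`) is injective over `E_n = K[x]/(x^{n+1})`:
every element annihilated by `x^l` lies in the image of multiplication by `x^{n+1-l}`. -/
theorem tau_injective_module
    (K M : Type*) [Field K] [AddCommGroup M] [Module K M] [FiniteDimensional K M]
    (δ : ℕ → K → K)
    (h0 : ∀ a, δ 0 a = a)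
    (hadd : ∀ i a b, δ i (a + b) = δ i a + δ i b)
    (hmul : ∀ i a b, δ i (a * b) = ∑ j ∈ Finset.range (i + 1), δ j a * δ (i - j) b)
    (hiter : ∀ i j a, δ i (δ j a) = ((i + j).choose i : K) * δ (i + j) a)
    (σ : K ≃+* K) (hσδ : ∀ i a, σ (δ i a) = δ i (σ a))
    (σM : M ≃+ M) (hσM : ∀ (a : K) (m : M), σM (a • m) = σ a • σM m)
    (n : ℕ)
    (X : Module.End K (((ℕ × M) →₀ K) ⧸ tauRel K M δ n))
    (hX0 : ∀ m : M, X (tauGen K M δ n 0 m) = 0)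
    (hXsucc : ∀ i : ℕ, i < n → ∀ m : M, X (tauGen K M δ n (i + 1) m) = tauGen K M δ n i m) :
    ∀ l : ℕ, l ≤ n + 1 →
      ∀ v : ((ℕ × M) →₀ K) ⧸ tauRel K M δ n,
        (X ^ l) v = 0 → ∃ w, (X ^ (n + 1 - l)) w = v :=
  tau_injective_module_general K M δ hadd hmul n X hX0 hXsucc
end

section
/- Let k be a field and E a finite-dimensional commutative k-algebra whose reduction E_red = E/nil(E) is a separable (étale) k-algebra. Let A be any finite-dimensional associative k-algebra, S a simple E-module, and T a simple A-module. Then S ⊗_k T is a semisimple module over E ⊗_k A. -/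
open TensorProduct

section RightAction

variable (k : Type*) [CommSemiring k] {A : Type*} [Semiring A] [Algebra k A]
variable {S : Type*} [AddCommMonoid S] [Module k S]
variable {T : Type*} [AddCommMonoid T] [Module k T] [Module A T] [IsScalarTower k A T]

/-- The action of `a : A` on `T` as a `k`-linear map. -/
noncomputable def actionMap (a : A) : T →ₗ[k] T :=
  { toFun := fun t => a • t
    map_add' := fun x y => smul_add a x y
    map_smul' := fun c t => by
      simp only [RingHom.id_apply]
      rw [← algebraMap_smul A c t, smul_smul, ← Algebra.commutes, ← smul_smul,
        algebraMap_smul] }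

/-- The action of `A` on the second factor of `S ⊗[k] T`. -/
noncomputable instance (priority := 50) rightFactorModule : Module A (S ⊗[k] T) where
  smul a := LinearMap.lTensor S (actionMap k a)
  one_smul x := by
    have h : actionMap k (1 : A) = (LinearMap.id : T →ₗ[k] T) := by
      ext t; exact one_smul A t
    show LinearMap.lTensor S (actionMap k (1 : A)) x = x
    rw [h, LinearMap.lTensor_id]; rfl
  mul_smul a b x := by
    have h : actionMap k (a * b) =
        (actionMap k a : T →ₗ[k] T).comp (actionMap k b : T →ₗ[k] T) := by
      ext t; exact mul_smul a b t
    show LinearMap.lTensor S (actionMap k (a * b)) x =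
      LinearMap.lTensor S (actionMap k a) (LinearMap.lTensor S (actionMap k b) x)
    rw [h, LinearMap.lTensor_comp]; rfl
  smul_zero a := map_zero _
  smul_add a x y := map_add _ x y
  add_smul a b x := by
    have h : actionMap k (a + b) =
        (actionMap k a : T →ₗ[k] T) + (actionMap k b : T →ₗ[k] T) := by
      ext t; exact add_smul a b t
    show LinearMap.lTensor S (actionMap k (a + b)) x =
      LinearMap.lTensor S (actionMap k a) x + LinearMap.lTensor S (actionMap k b) x
    rw [h, LinearMap.lTensor_add]; rfl
  zero_smul x := by
    have h : actionMap k (0 : A) = (0 : T →ₗ[k] T) := by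
      ext t; exact zero_smul A t
    show LinearMap.lTensor S (actionMap k (0 : A)) x = 0
    rw [h, LinearMap.lTensor_zero]; rfl

end RightAction

section Instances

variable (k : Type*) [CommSemiring k]
variable {E : Type*} [CommSemiring E] [Algebra k E]
variable {A : Type*} [Semiring A] [Algebra k A]
variable {S : Type*} [AddCommMonoid S] [Module k S] [Module E S] [IsScalarTower k E S]
variable {T : Type*} [AddCommMonoid T] [Module k T] [Module A T] [IsScalarTower k A T]

noncomputable instance (priority := 2000) : IsScalarTower k A (S ⊗[k] T) where
  smul_assoc c a x := by
    have h : actionMap k ((c • a : A)) = c • (actionMap k a : T →ₗ[k] T) := by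
      ext t; exact smul_assoc c a t
    show LinearMap.lTensor S (actionMap k (c • a)) x = c • LinearMap.lTensor S (actionMap k a) x
    rw [h, LinearMap.lTensor_smul]; rfl

noncomputable instance (priority := 2000) : IsScalarTower k E (S ⊗[k] T) where
  smul_assoc c e x := by
    induction x using TensorProduct.induction_on with
    | zero => simp
    | tmul s t =>
        rw [TensorProduct.smul_tmul', TensorProduct.smul_tmul', TensorProduct.smul_tmul',
          smul_assoc]
    | add x y hx hy => rw [smul_add, smul_add, smul_add, hx, hy]

noncomputable instance (priority := 2000) : SMulCommClass E A (S ⊗[k] T) where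
  smul_comm e a x := by
    show e • LinearMap.lTensor S (actionMap k a) x = LinearMap.lTensor S (actionMap k a) (e • x)
    induction x using TensorProduct.induction_on with
    | zero => simp
    | tmul s t =>
        rw [LinearMap.lTensor_tmul, TensorProduct.smul_tmul', TensorProduct.smul_tmul',
          LinearMap.lTensor_tmul]
    | add x y hx hy => rw [map_add, smul_add, smul_add, map_add, hx, hy]

/-- The canonical `E ⊗[k] A`-module structure on `S ⊗[k] T`, for `S` an `E`-module and
`T` an `A`-module. -/
noncomputable instance (priority := 50) tensorTensorModule : Module (E ⊗[k] A) (S ⊗[k] T) :=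
  TensorProduct.Algebra.module (R := k) (A := E) (B := A) (M := S ⊗[k] T)

end Instances


/-!
The nilradical of `E` kills the simple module `S`, so the `E ⊗ A`-action on `S ⊗ T` factors
through `E_red ⊗ A`. As an `A`-module, `S ⊗ T` is a sum of images of `T`, hence semisimple.
Since `E_red` is étale over `k`, it has a separability element `t = ∑ xᵢ ⊗ yᵢ`, with
`(1 ⊗ s) t = (s ⊗ 1) t` and `∑ xᵢ yᵢ = 1`. Given an `E_red ⊗ A`-submodule `N` and an `A`-linear
projection `π` onto `N`, the average `∑ xᵢ π yᵢ` is still a projection onto `N`, and it commutes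
with `E_red`; its kernel is the required complement of `N`.
-/

theorem isSemisimpleModule_tensorProduct_right (k : Type*) [CommSemiring k] {A : Type*} [Ring A]
    [Algebra k A] (S : Type*) [AddCommGroup S] [Module k S]
    {T : Type*} [AddCommGroup T] [Module k T] [Module A T] [IsScalarTower k A T]
    [IsSemisimpleModule A T] :
    IsSemisimpleModule A (S ⊗[k] T) := by
  let tmulLeft (s : S) : T →ₗ[A] S ⊗[k] T :=
    { toAddHom := (TensorProduct.mk k S T s).toAddHom
      map_smul' := fun _ _ => rfl }
  refine isSemisimpleModule_of_isSemisimpleModule_submodule (s := Set.univ)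
    (p := fun s => LinearMap.range (tmulLeft s)) (fun _ _ => IsSemisimpleModule.range _) ?_
  refine eq_top_iff.mpr fun x _ => ?_
  induction x using TensorProduct.induction_on with
  | zero => exact Submodule.zero_mem _
  | tmul s t => exact Submodule.mem_iSup_of_mem s (Submodule.mem_iSup_of_mem trivial ⟨t, rfl⟩)
  | add x y hx hy => exact Submodule.add_mem _ (hx trivial) (hy trivial)

theorem IsSemisimpleModule.nilradical_le_annihilator {R M : Type*} [CommRing R] [AddCommGroup M]
    [Module R M] [IsSemisimpleModule R M] : nilradical R ≤ Module.annihilator R M :=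
  (annihilator_isRadical M R).radical ▸ Ideal.radical_mono bot_le

theorem IsSemisimpleModule.of_surjective_ringHom {R S M : Type*} [Ring R] [Ring S]
    [AddCommGroup M] [Module R M] [Module S M] (σ : R →+* S) (hσ : Function.Surjective σ)
    (hσM : ∀ (r : R) (m : M), σ r • m = r • m) [IsSemisimpleModule S M] :
    IsSemisimpleModule R M := by
  have : RingHomSurjective σ := ⟨hσ⟩
  let id' : M →ₛₗ[σ] M :=
    { toFun := id, map_add' := fun _ _ => rfl, map_smul' := fun r m => (hσM r m).symm }
  exact (id'.isSemisimpleModule_iff_of_bijective Function.bijective_id).mpr ‹_›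

section Sandwich

open TensorProduct

variable (k : Type*) {Q A M : Type*} [CommSemiring k] [CommSemiring Q] [Algebra k Q] [Semiring A]
  [Algebra k A] [AddCommMonoid M] [Module k M] [Module Q M] [Module A M]
  [IsScalarTower k Q M] [IsScalarTower k A M] [SMulCommClass Q A M]

def sandwich (π : Module.End A M) : Q ⊗[k] Q →ₗ[k] Module.End A M :=
  LinearMap.mul' k _ ∘ₗ TensorProduct.map
    (LinearMap.mulRight k π ∘ₗ (Algebra.lsmul k A M).toLinearMap) (Algebra.lsmul k A M).toLinearMap

variable {k} {N : Submodule A M} {π : Module.End A M}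

theorem sandwich_tmul (x y : Q) :
    sandwich k π (x ⊗ₜ y) = Algebra.lsmul k A M x * π * Algebra.lsmul k A M y :=
  rfl

theorem sandwich_tmul_one_mul (s : Q) (z : Q ⊗[k] Q) :
    sandwich k π ((s ⊗ₜ 1) * z) = Algebra.lsmul k A M s * sandwich k π z := by
  induction z using TensorProduct.induction_on with
  | zero => simp
  | tmul x y =>
    simp only [Algebra.TensorProduct.tmul_mul_tmul, one_mul, sandwich_tmul, map_mul, mul_assoc]
  | add x y hx hy => rw [mul_add, map_add, map_add, hx, hy, mul_add]

theorem sandwich_one_tmul_mul (s : Q) (z : Q ⊗[k] Q) :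
    sandwich k π ((1 ⊗ₜ s) * z) = sandwich k π z * Algebra.lsmul k A M s := by
  induction z using TensorProduct.induction_on with
  | zero => simp
  | tmul x y =>
    simp only [Algebra.TensorProduct.tmul_mul_tmul, one_mul, sandwich_tmul, mul_comm s y, map_mul,
      mul_assoc]
  | add x y hx hy => rw [mul_add, map_add, map_add, hx, hy, add_mul]

theorem sandwich_apply_mem (hN : ∀ (x : Q), ∀ m ∈ N, x • m ∈ N) (hπ : ∀ m, π m ∈ N)
    (z : Q ⊗[k] Q) (m : M) : sandwich k π z m ∈ N := by
  induction z using TensorProduct.induction_on with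
  | zero => exact N.zero_mem
  | tmul x y => exact hN x _ (hπ _)
  | add x y hx hy => rw [map_add, LinearMap.add_apply]; exact N.add_mem hx hy

theorem sandwich_apply_of_mem (hN : ∀ (x : Q), ∀ m ∈ N, x • m ∈ N) (hπ : ∀ m ∈ N, π m = m)
    (z : Q ⊗[k] Q) {m : M} (hm : m ∈ N) :
    sandwich k π z m = Algebra.TensorProduct.lmul' k z • m := by
  induction z using TensorProduct.induction_on with
  | zero => simp
  | tmul x y =>
    simp only [sandwich_tmul, Module.End.mul_apply, Algebra.lsmul_apply, hπ _ (hN y m hm),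
      Algebra.TensorProduct.lmul'_apply_tmul, mul_smul]
  | add x y hx hy => rw [map_add, LinearMap.add_apply, hx, hy, map_add, add_smul]

theorem isProj_sandwich (hN : ∀ (x : Q), ∀ m ∈ N, x • m ∈ N) (hπ : LinearMap.IsProj N π)
    {z : Q ⊗[k] Q} (hz : Algebra.TensorProduct.lmul' k z = 1) :
    LinearMap.IsProj N (sandwich k π z) :=
  ⟨sandwich_apply_mem hN hπ.map_mem z, fun m hm => by
    rw [sandwich_apply_of_mem hN hπ.map_id z hm, hz, one_smul]⟩

end Sandwich

section TensorAction

open TensorProduct Algebra.FormallyUnramified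

attribute [local instance] TensorProduct.Algebra.module

theorem Algebra.TensorProduct.map_id_smul {k Q Q' A M : Type*} [CommSemiring k] [Semiring Q]
    [Algebra k Q] [Semiring Q'] [Algebra k Q'] [Semiring A] [Algebra k A]
    [AddCommMonoid M] [Module k M] [Module Q M] [Module Q' M] [Module A M]
    [IsScalarTower k Q M] [IsScalarTower k Q' M] [IsScalarTower k A M]
    [SMulCommClass Q A M] [SMulCommClass Q' A M]
    (f : Q →ₐ[k] Q') (hf : ∀ (x : Q) (m : M), f x • m = x • m) (r : Q ⊗[k] A) (m : M) :
    Algebra.TensorProduct.map f (AlgHom.id k A) r • m = r • m := by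
  induction r using TensorProduct.induction_on with
  | zero => simp
  | tmul x a => simp [TensorProduct.Algebra.smul_def, hf]
  | add r r' hr hr' => simp only [map_add, add_smul, hr, hr']

variable {k Q A M : Type*} [CommRing k] [CommRing Q] [Algebra k Q] [Ring A] [Algebra k A]
  [AddCommGroup M] [Module k M] [Module Q M] [Module A M]
  [IsScalarTower k Q M] [IsScalarTower k A M] [SMulCommClass Q A M]

variable (k) in
def LinearMap.tensorLinearOfCommute (f : Module.End A M)
    (hf : ∀ x : Q, Commute (Algebra.lsmul k A M x) f) : M →ₗ[Q ⊗[k] A] M where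
  toAddHom := f.toAddHom
  map_smul' r m := by
    induction r using TensorProduct.induction_on with
    | zero => simp
    | tmul x a =>
      show f ((x ⊗ₜ a) • m) = (x ⊗ₜ a) • f m
      rw [TensorProduct.Algebra.smul_def, TensorProduct.Algebra.smul_def, ← f.map_smul]
      exact LinearMap.congr_fun (hf x).eq.symm (a • m)
    | add r r' hr hr' => simp_all [add_smul]

variable [Algebra.FormallyUnramified k Q] [Algebra.EssFiniteType k Q]

theorem commute_lsmul_sandwich_elem (π : Module.End A M) (s : Q) :
    Commute (Algebra.lsmul k A M s) (sandwich k π (elem k Q)) := by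
  rw [Commute, SemiconjBy, ← sandwich_tmul_one_mul, ← sandwich_one_tmul_mul, one_tmul_mul_elem]

theorem isSemisimpleModule_tensorProduct_of_formallyUnramified [IsSemisimpleModule A M] :
    IsSemisimpleModule (Q ⊗[k] A) M := by
  refine { exists_isCompl := fun N => ?_ }
  have hQ (x : Q) (m : M) : (x ⊗ₜ[k] (1 : A)) • m = x • m := by
    rw [TensorProduct.Algebra.smul_def, one_smul]
  have hA (a : A) (m : M) : ((1 : Q) ⊗ₜ[k] a) • m = a • m := by
    rw [TensorProduct.Algebra.smul_def, one_smul]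
  let N' : Submodule A M :=
    { N.toAddSubmonoid with smul_mem' := fun a m hm => hA a m ▸ N.smul_mem _ hm }
  obtain ⟨C, hC⟩ := exists_isCompl N'
  let π := N'.projection C hC
  have hπ : LinearMap.IsProj N' π :=
    ⟨Submodule.projection_apply_mem hC, fun m hm => Submodule.projection_apply_left hC ⟨m, hm⟩⟩
  have hf := isProj_sandwich (fun x m hm => hQ x m ▸ N.smul_mem _ hm) hπ (lmul_elem (R := k))
  let g := (sandwich k π (elem k Q)).tensorLinearOfCommute k (commute_lsmul_sandwich_elem π)
  exact ⟨LinearMap.ker g, LinearMap.IsProj.isCompl (f := g) ⟨hf.map_mem, hf.map_id⟩⟩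

end TensorAction

theorem tensor_of_simples_isSemisimple_general
    (k E A S T : Type u) [Field k]
    [CommRing E] [Algebra k E]
    (hsep : Algebra.Etale k (E ⧸ nilradical E))
    [Ring A] [Algebra k A]
    [AddCommGroup S] [Module k S] [Module E S] [IsScalarTower k E S] [IsSimpleModule E S]
    [AddCommGroup T] [Module k T] [Module A T] [IsScalarTower k A T] [IsSimpleModule A T] :
    IsSemisimpleModule (E ⊗[k] A) (S ⊗[k] T) := by
  have hS : Module.IsTorsionBySet E S (nilradical E) := fun s r =>
    Module.mem_annihilator.mp (IsSemisimpleModule.nilradical_le_annihilator r.2) s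
  let _ : Module (E ⧸ nilradical E) S := hS.module
  have : IsScalarTower k (E ⧸ nilradical E) S := hS.isScalarTower
  have : IsSemisimpleModule A (S ⊗[k] T) := isSemisimpleModule_tensorProduct_right k S
  have := isSemisimpleModule_tensorProduct_of_formallyUnramified (k := k) (Q := E ⧸ nilradical E)
    (A := A) (M := S ⊗[k] T)
  refine IsSemisimpleModule.of_surjective_ringHom
    (Algebra.TensorProduct.map (Ideal.Quotient.mkₐ k (nilradical E)) (AlgHom.id k A)).toRingHom
    ?_ (Algebra.TensorProduct.map_id_smul _ fun x m => algebraMap_smul (E ⧸ nilradical E) x m)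
  exact TensorProduct.map_surjective (Ideal.Quotient.mkₐ_surjective k _) Function.surjective_id

/-- Let `k` be a field, `E` a finite-dimensional commutative `k`-algebra whose
reduction `E/nil(E)` is separable (étale) over `k`, `A` any finite-dimensional associative
`k`-algebra, `S` a simple `E`-module, and `T` a simple `A`-module.  Then `S ⊗[k] T` is a
semisimple module over `E ⊗[k] A`. -/
theorem tensor_of_simples_isSemisimple
    (k E A S T : Type u) [Field k]
    [CommRing E] [Algebra k E] [FiniteDimensional k E]
    (hsep : Algebra.Etale k (E ⧸ nilradical E))
    [Ring A] [Algebra k A] [FiniteDimensional k A]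
    [AddCommGroup S] [Module k S] [Module E S] [IsScalarTower k E S] [IsSimpleModule E S]
    [AddCommGroup T] [Module k T] [Module A T] [IsScalarTower k A T] [IsSimpleModule A T] :
    IsSemisimpleModule (E ⊗[k] A) (S ⊗[k] T) :=
  tensor_of_simples_isSemisimple_general k E A S T hsep
end

section
/- Let R be a commutative ring, E an R-coalgebra which is finitely generated and projective as an R-module, with counit p : E → R. For n ≥ 1 let E_n ⊆ E^{⊗n} be the joint equalizer of the n maps E^{⊗n} → E^{⊗(n−1)} obtained by applying p in one tensor factor and the identity elsewhere (E₁ = E). Then for any R-coalgebra H with comultiplication c and any R-linear map t : H → E respecting counits, the map t_n = t^{⊗n} ∘ c^{(n−1)} : H → E^{⊗n} factors through E_n, where c^{(n−1)} : H → H^{⊗n} is the (n−1)-fold iterated comultiplication. -/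
/-! Every face map sends `t_{n+1} = (t ⊗ t_n) ∘ c` to `t_n`: for the first factor this is the counit
axiom of `H` together with `p ∘ t = p`, for a later factor it is the same statement one level down.
Hence all face maps agree on the image of `t_{n+1}`. -/

open TensorProduct

universe u

variable (R : Type u) [CommRing R]
variable (E : Type u) [AddCommGroup E] [Module R E] [Coalgebra R E]

/-- The iterated tensor power `E^{⊗n}` of `E` over `R` (with `E^{⊗0} = R`),
packaged as a bundled `R`-module. -/
noncomputable def tensorPow : ℕ → ModuleCat R
  | 0 => ModuleCat.of R R
  | (n + 1) => ModuleCat.of R (E ⊗[R] (tensorPow n))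

/-- The map `E^{⊗(n+1)} → E^{⊗n}` applying the counit `p` in the `i`-th tensor factor and
the identity elsewhere. -/
noncomputable def applyCounitAt : (n : ℕ) → Fin (n + 1) → (tensorPow R E (n + 1) →ₗ[R] tensorPow R E n)
  | n, ⟨0, _⟩ =>
      (TensorProduct.lid R (tensorPow R E n)).toLinearMap ∘ₗ
        LinearMap.rTensor (tensorPow R E n) (Coalgebra.counit : E →ₗ[R] R)
  | (n + 1), ⟨i + 1, h⟩ =>
      LinearMap.lTensor E (applyCounitAt n ⟨i, by omega⟩)

/-- The joint equalizer `E_{n+1} ⊆ E^{⊗(n+1)}` of the `n+1` maps `E^{⊗(n+1)} → E^{⊗n}`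
obtained by applying the counit in one tensor factor. -/
noncomputable def jointEqualizer (n : ℕ) : Submodule R (tensorPow R E (n + 1)) :=
  ⨅ (i : Fin (n + 1)) (j : Fin (n + 1)),
    LinearMap.ker (applyCounitAt R E n i - applyCounitAt R E n j)

variable (H : Type u) [AddCommGroup H] [Module R H] [Coalgebra R H]

/-- For an `R`-linear map `t : H → E`, the iterated map
`t_n = t^{⊗n} ∘ c^{(n-1)} : H → E^{⊗n}` (with `t_0` the counit of `H`). -/
noncomputable def iteratedComul (t : H →ₗ[R] E) : (n : ℕ) → (H →ₗ[R] tensorPow R E n)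
  | 0 => (Coalgebra.counit : H →ₗ[R] R)
  | (n + 1) => TensorProduct.map t (iteratedComul t n) ∘ₗ (Coalgebra.comul : H →ₗ[R] H ⊗[R] H)

theorem lid_comp_rTensor_comp_map_comp_comul {N M : Type*} [AddCommGroup N] [Module R N]
    [AddCommGroup M] [Module R M] (ε : N →ₗ[R] R) (t : H →ₗ[R] N)
    (ht : ε ∘ₗ t = Coalgebra.counit) (f : H →ₗ[R] M) :
    ((TensorProduct.lid R M).toLinearMap ∘ₗ LinearMap.rTensor M ε) ∘ₗ
      (map t f ∘ₗ Coalgebra.comul) = f := by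
  rw [LinearMap.comp_assoc, ← LinearMap.comp_assoc _ _ (LinearMap.rTensor M ε),
    LinearMap.rTensor_comp_map, ht,
    ← LinearMap.lTensor_comp_rTensor, LinearMap.comp_assoc, Coalgebra.rTensor_counit_comp_comul]
  ext h
  simp

theorem applyCounitAt_comp_iteratedComul (t : H →ₗ[R] E)
    (ht : (Coalgebra.counit : E →ₗ[R] R) ∘ₗ t = (Coalgebra.counit : H →ₗ[R] R)) :
    ∀ (n : ℕ) (i : Fin (n + 1)),
      applyCounitAt R E n i ∘ₗ iteratedComul R E H t (n + 1) = iteratedComul R E H t n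
  | n, ⟨0, _⟩ => by
    rw [applyCounitAt]
    exact lid_comp_rTensor_comp_map_comp_comul R H _ t ht (iteratedComul R E H t n)
  | n + 1, ⟨i + 1, hi⟩ => by
    show LinearMap.lTensor E (applyCounitAt R E n ⟨i, by omega⟩) ∘ₗ
      (map t (iteratedComul R E H t (n + 1)) ∘ₗ Coalgebra.comul) = _
    rw [← LinearMap.comp_assoc, LinearMap.lTensor_comp_map,
      applyCounitAt_comp_iteratedComul t ht n ⟨i, by omega⟩]
    rfl

theorem iteratedComul_mem_jointEqualizer
    (t : H →ₗ[R] E)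
    (ht : (Coalgebra.counit : E →ₗ[R] R) ∘ₗ t = (Coalgebra.counit : H →ₗ[R] R)) :
    ∀ (n : ℕ) (h : H), iteratedComul R E H t (n + 1) h ∈ jointEqualizer R E n := by
  intro n h
  simp only [jointEqualizer, Submodule.mem_iInf, LinearMap.mem_ker, LinearMap.sub_apply,
    sub_eq_zero]
  intro i j
  rw [← LinearMap.comp_apply, applyCounitAt_comp_iteratedComul R E H t ht,
    ← LinearMap.comp_apply, applyCounitAt_comp_iteratedComul R E H t ht]
end
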